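/- The Euclidean projection of a vector y onto the capped simplex {f ∈ [0,1]^N : Σ f_i = C}, when y satisfies 0 ≤ y_i ≤ 1 for all i, Σ y_i = C + η for some η > 0, and the resulting uniformly-reduced values stay in [0,1], is given by subtracting ρ = η/|M_p| from every strictly positive component of y, where M_p = {i : y_i > 0}; formally, if y_i − ρ ≥ 0 for all i ∈ M_p and y_i − ρ ≤ 1 for all i ∈ M_p, then f with f_i = y_i − ρ for i ∈ M_p and f_i = 0 otherwise is the unique minimizer of ½‖f − y‖² over the capped simplex. -/

import Mathlib

open Finset

/-!
Write `𝟙_M` for the indicator of `M = M_p`. Since `y` vanishes off `M`, the candidate is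
`f = y - ρ 𝟙_M`, and `∑ f = C + η - |M| ρ = C`. For any `g` in the capped simplex,
`⟪g - f, f - y⟫ = ρ (∑_M f - ∑_M g) = ρ (C - ∑_M g) ≥ 0` because `g ≥ 0` and `∑ g = C`.
This variational inequality gives `‖g - y‖² ≥ ‖f - y‖² + ‖g - f‖²`, hence `f` is the
unique minimiser.
-/

section InnerProductSpace

variable {E : Type*} [NormedAddCommGroup E] [InnerProductSpace ℝ E] {f g y : E}

theorem sq_norm_sub_add_sq_norm_sub_le_of_inner_nonneg (h : 0 ≤ inner ℝ (g - f) (f - y)) :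
    ‖f - y‖ ^ 2 + ‖g - f‖ ^ 2 ≤ ‖g - y‖ ^ 2 := by
  have hpyth := norm_add_sq_real (g - f) (f - y)
  rw [sub_add_sub_cancel] at hpyth
  linarith

theorem sq_norm_sub_lt_of_inner_nonneg (h : 0 ≤ inner ℝ (g - f) (f - y)) (hne : g ≠ f) :
    ‖f - y‖ ^ 2 < ‖g - y‖ ^ 2 := by
  have hpos : 0 < ‖g - f‖ ^ 2 := by
    have := norm_pos_iff.2 (sub_ne_zero.2 hne)
    positivity
  linarith [sq_norm_sub_add_sq_norm_sub_le_of_inner_nonneg h]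

end InnerProductSpace

theorem sum_sub_div_card_of_sum_eq {ι : Type*} {M : Finset ι} {a : ι → ℝ} {c η : ℝ}
    (hM : M.Nonempty) (ha : ∑ i ∈ M, a i = c + η) : ∑ i ∈ M, (a i - η / M.card) = c := by
  have hcard : (M.card : ℝ) ≠ 0 := Nat.cast_ne_zero.2 hM.card_pos.ne'
  rw [sum_sub_distrib, ha, sum_const, nsmul_eq_mul, mul_div_cancel₀ _ hcard]
  ring

def cappedSimplex (ι : Type*) [Fintype ι] (C : ℝ) : Set (EuclideanSpace ℝ ι) :=
  {g | (∀ i, 0 ≤ g i ∧ g i ≤ 1) ∧ ∑ i, g i = C}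

section UniformShift

variable {ι : Type*} [Fintype ι] [DecidableEq ι] {M : Finset ι} {ρ : ℝ} {f y : EuclideanSpace ℝ ι}

theorem inner_sub_sub_eq_of_sub_eq_ite (hfy : ∀ i, f i - y i = if i ∈ M then -ρ else 0)
    (g : EuclideanSpace ℝ ι) :
    inner ℝ (g - f) (f - y) = ρ * (∑ i ∈ M, f i - ∑ i ∈ M, g i) := by
  simp only [PiLp.inner_apply, PiLp.sub_apply, Real.inner_apply, hfy, mul_ite, mul_zero,
    sum_ite_mem, univ_inter, ← sum_sub_distrib, mul_sum]
  exact sum_congr rfl fun i _ => by ring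

theorem inner_sub_sub_nonneg_of_mem_cappedSimplex {C : ℝ} (hρ : 0 ≤ ρ)
    (hfy : ∀ i, f i - y i = if i ∈ M then -ρ else 0) (hfM : ∑ i ∈ M, f i = C)
    {g : EuclideanSpace ℝ ι} (hg : g ∈ cappedSimplex ι C) :
    0 ≤ inner ℝ (g - f) (f - y) := by
  have hgM : ∑ i ∈ M, g i ≤ C := hg.2 ▸ sum_le_univ_sum_of_nonneg fun i => (hg.1 i).1
  rw [inner_sub_sub_eq_of_sub_eq_ite hfy]
  exact mul_nonneg hρ (by linarith)

end UniformShift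

theorem capped_simplex_projection_uniform_excess_general (N C : ℕ)
    (y : EuclideanSpace ℝ (Fin N)) (η : ℝ) (hη : 0 < η)
    (hy0 : ∀ i, 0 ≤ y i)
    (hysum : ∑ i, y i = (C : ℝ) + η)
    (Mp : Finset (Fin N)) (hMp : ∀ i, i ∈ Mp ↔ 0 < y i)
    (ρ : ℝ) (hρ : ρ = η / Mp.card)
    (hlow : ∀ i ∈ Mp, 0 ≤ y i - ρ) (hhigh : ∀ i ∈ Mp, y i - ρ ≤ 1)
    (f : EuclideanSpace ℝ (Fin N))
    (hf : ∀ i, f i = if i ∈ Mp then y i - ρ else 0)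
    (F : Set (EuclideanSpace ℝ (Fin N)))
    (hF : F = {g : EuclideanSpace ℝ (Fin N) |
      (∀ i, 0 ≤ g i ∧ g i ≤ 1) ∧ ∑ i, g i = (C : ℝ)}) :
    f ∈ F ∧ (∀ g ∈ F, (1 / 2) * ‖f - y‖ ^ 2 ≤ (1 / 2) * ‖g - y‖ ^ 2) ∧
      (∀ g ∈ F, g ≠ f → (1 / 2) * ‖f - y‖ ^ 2 < (1 / 2) * ‖g - y‖ ^ 2) := by
  change F = cappedSimplex (Fin N) C at hF
  subst hF
  have hy_off : ∀ i ∉ Mp, y i = 0 := fun i hi =>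
    le_antisymm (not_lt.1 fun h => hi ((hMp i).2 h)) (hy0 i)
  have hyM : ∑ i ∈ Mp, y i = C + η := hysum ▸ sum_subset (subset_univ Mp) fun i _ => hy_off i
  have hMne : Mp.Nonempty :=
    nonempty_of_sum_ne_zero (hyM ▸ by positivity : ∑ i ∈ Mp, y i ≠ 0)
  have hfy : ∀ i, f i - y i = if i ∈ Mp then -ρ else 0 := fun i => by
    by_cases hi : i ∈ Mp <;> simp [hf i, hi, hy_off]
  have hfM : ∑ i ∈ Mp, f i = C := by
    rw [sum_congr rfl fun i hi => (by simp [hf i, hi] : f i = y i - ρ), hρ]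
    exact sum_sub_div_card_of_sum_eq hMne hyM
  have hfF : f ∈ cappedSimplex (Fin N) C := by
    refine ⟨fun i => ?_, ?_⟩
    · by_cases hi : i ∈ Mp <;> simp [hf i, hi, hlow, hhigh]
    · rw [← hfM, sum_subset (subset_univ Mp) fun i _ hi => by simp [hf i, hi]]
  have hvar : ∀ g ∈ cappedSimplex (Fin N) C, 0 ≤ inner ℝ (g - f) (f - y) := fun g hg =>
    inner_sub_sub_nonneg_of_mem_cappedSimplex (by rw [hρ]; positivity) hfy hfM hg
  refine ⟨hfF, fun g hg => ?_, fun g hg hne => ?_⟩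
  · linarith [sq_norm_sub_add_sq_norm_sub_le_of_inner_nonneg (hvar g hg), sq_nonneg ‖g - f‖]
  · linarith [sq_norm_sub_lt_of_inner_nonneg (hvar g hg) hne]

/-- Uniform-excess formula for the Euclidean projection onto the capped simplex:
if `0 ≤ y_i ≤ 1`, `∑ y_i = C + η` with `η > 0`, and subtracting `ρ = η/|M_p|` from
each strictly positive component keeps all values in `[0,1]`, then the vector `f`
with `f_i = y_i - ρ` on `M_p = {i : y_i > 0}` and `0` elsewhere is the unique
minimizer of `½‖f - y‖²` over the capped simplex. -/
theorem capped_simplex_projection_uniform_excess (N C : ℕ) (hC : 0 < C) (hCN : C < N)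
    (y : EuclideanSpace ℝ (Fin N)) (η : ℝ) (hη : 0 < η)
    (hy0 : ∀ i, 0 ≤ y i) (hy1 : ∀ i, y i ≤ 1)
    (hysum : ∑ i, y i = (C : ℝ) + η)
    (Mp : Finset (Fin N)) (hMp : ∀ i, i ∈ Mp ↔ 0 < y i)
    (ρ : ℝ) (hρ : ρ = η / Mp.card)
    (hlow : ∀ i ∈ Mp, 0 ≤ y i - ρ) (hhigh : ∀ i ∈ Mp, y i - ρ ≤ 1)
    (f : EuclideanSpace ℝ (Fin N))
    (hf : ∀ i, f i = if i ∈ Mp then y i - ρ else 0)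
    (F : Set (EuclideanSpace ℝ (Fin N)))
    (hF : F = {g : EuclideanSpace ℝ (Fin N) |
      (∀ i, 0 ≤ g i ∧ g i ≤ 1) ∧ ∑ i, g i = (C : ℝ)}) :
    f ∈ F ∧ (∀ g ∈ F, (1 / 2) * ‖f - y‖ ^ 2 ≤ (1 / 2) * ‖g - y‖ ^ 2) ∧
      (∀ g ∈ F, g ≠ f → (1 / 2) * ‖f - y‖ ^ 2 < (1 / 2) * ‖g - y‖ ^ 2) :=
  capped_simplex_projection_uniform_excess_general N C y η hη hy0 hysum Mp hMp ρ hρ hlow hhigh f hf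
    F hF
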